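/- Let 𝒱 ⊂ ℝ^d be finite with Span(𝒱) = ℝ^d, ∑_{v∈𝒱} v = 0, and C_𝒱 the optimal constant of the Minkowski-type optimization. For any real numbers (b_v)_{v∈𝒱}, the intersection ⋂_{v∈𝒱} {p : ⟨p,v⟩ ≤ b_v} has Lebesgue volume at most C_𝒱 (∑_{v∈𝒱} b_v)^d when ∑_v b_v > 0 (and volume 0 when ∑_v b_v ≤ 0 and the intersection is nonempty with finite volume—i.e., the scaling-invariant inequality vol ≤ C_𝒱 (∑_v b_v)_+^d holds whenever the volume is finite). -/

import Mathlib

open MeasureTheory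
open scoped RealInnerProductSpace ENNReal

/-- The polyhedron `⋂_{v ∈ 𝒱} {p : ⟨p,v⟩ ≤ b v}`. -/
def Rset {d : ℕ} (𝒱 : Finset (EuclideanSpace ℝ (Fin d)))
    (b : EuclideanSpace ℝ (Fin d) → ℝ) : Set (EuclideanSpace ℝ (Fin d)) :=
  {p | ∀ v ∈ 𝒱, ⟪p, v⟫ ≤ b v}

open scoped Pointwise

/-! For `∑ b_v > 0` the polyhedron `Rset 𝒱 b` is the dilate by `∑ b_v` of a polyhedron with
normalized levels, whose volume is at most `C`. For `∑ b_v ≤ 0` summing the constraints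
against `∑ v = 0` forces every constraint to be tight, so any two points of the polyhedron
have the same inner product with every `v`; since `𝒱` spans, the polyhedron is at most a point,
hence null in positive dimension. -/

namespace Rset

variable {d : ℕ} {𝒱 : Finset (EuclideanSpace ℝ (Fin d))}

theorem smul {t : ℝ} (ht : 0 < t) (c : EuclideanSpace ℝ (Fin d) → ℝ) :
    Rset 𝒱 (t • c) = t • Rset 𝒱 c := by
  ext p
  simp only [Set.mem_smul_set_iff_inv_smul_mem₀ ht.ne', Rset, Set.mem_ofPred_eq, Pi.smul_apply,
    smul_eq_mul, real_inner_smul_left, inv_mul_le_iff₀ ht]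

theorem volume_smul {t : ℝ} (ht : 0 < t) (c : EuclideanSpace ℝ (Fin d) → ℝ) :
    volume (Rset 𝒱 (t • c)) = ENNReal.ofReal t ^ d * volume (Rset 𝒱 c) := by
  rw [smul ht, Measure.addHaar_smul_of_nonneg volume ht.le, finrank_euclideanSpace_fin,
    ENNReal.ofReal_pow ht.le]

theorem volume_le_of_sum_pos {C : ℝ≥0∞}
    (hC : ∀ c : EuclideanSpace ℝ (Fin d) → ℝ, ∑ v ∈ 𝒱, c v = 1 → volume (Rset 𝒱 c) ≤ C)
    {b : EuclideanSpace ℝ (Fin d) → ℝ} (hb : 0 < ∑ v ∈ 𝒱, b v) :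
    volume (Rset 𝒱 b) ≤ C * ENNReal.ofReal (∑ v ∈ 𝒱, b v) ^ d := by
  set S := ∑ v ∈ 𝒱, b v
  have hnormalized : ∑ v ∈ 𝒱, (S⁻¹ • b) v = 1 := by
    simp only [Pi.smul_apply, smul_eq_mul, ← Finset.mul_sum]
    exact inv_mul_cancel₀ hb.ne'
  calc volume (Rset 𝒱 b) = ENNReal.ofReal S ^ d * volume (Rset 𝒱 (S⁻¹ • b)) := by
        rw [← volume_smul hb, smul_inv_smul₀ hb.ne']
    _ ≤ ENNReal.ofReal S ^ d * C := by gcongr; exact hC _ hnormalized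
    _ = C * ENNReal.ofReal S ^ d := mul_comm _ _

theorem inner_eq_of_sum_nonpos (hsum : ∑ v ∈ 𝒱, v = 0)
    {b : EuclideanSpace ℝ (Fin d) → ℝ} (hb : ∑ v ∈ 𝒱, b v ≤ 0)
    {p : EuclideanSpace ℝ (Fin d)} (hp : p ∈ Rset 𝒱 b) : ∀ v ∈ 𝒱, ⟪p, v⟫ = b v := by
  have hzero : ∑ v ∈ 𝒱, ⟪p, v⟫ = 0 := by rw [← inner_sum, hsum, inner_zero_right]
  exact (Finset.sum_eq_sum_iff_of_le hp).mp (le_antisymm (Finset.sum_le_sum hp) (hzero ▸ hb))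

theorem subsingleton_of_sum_nonpos
    (hspan : Submodule.span ℝ (𝒱 : Set (EuclideanSpace ℝ (Fin d))) = ⊤)
    (hsum : ∑ v ∈ 𝒱, v = 0) {b : EuclideanSpace ℝ (Fin d) → ℝ} (hb : ∑ v ∈ 𝒱, b v ≤ 0) :
    (Rset 𝒱 b).Subsingleton := by
  intro p hp q hq
  have hperp : Submodule.span ℝ (𝒱 : Set (EuclideanSpace ℝ (Fin d))) ≤ (ℝ ∙ (p - q))ᗮ := by
    refine Submodule.span_le.mpr fun v hv => ?_
    rw [SetLike.mem_coe, Submodule.mem_orthogonal_singleton_iff_inner_right, inner_sub_left,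
      inner_eq_of_sum_nonpos hsum hb hp v hv, inner_eq_of_sum_nonpos hsum hb hq v hv, sub_self]
  rw [hspan, top_le_iff] at hperp
  have hself : ⟪p - q, p - q⟫ = 0 :=
    Submodule.mem_orthogonal_singleton_iff_inner_right.mp (hperp ▸ Submodule.mem_top)
  exact sub_eq_zero.mp (inner_self_eq_zero.mp hself)

theorem eq_univ_of_sum_eq_one {𝒱 : Finset (EuclideanSpace ℝ (Fin 0))}
    {c : EuclideanSpace ℝ (Fin 0) → ℝ} (hc : ∑ v ∈ 𝒱, c v = 1) : Rset 𝒱 c = Set.univ := by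
  refine Set.eq_univ_of_forall fun p v hv => ?_
  rw [Finset.sum_eq_single_of_mem v hv fun w _ hw => absurd (Subsingleton.elim w v) hw] at hc
  simp [hc, Subsingleton.elim p 0]

end Rset

theorem stmt19_general {d : ℕ} (𝒱 : Finset (EuclideanSpace ℝ (Fin d)))
    (hspan : Submodule.span ℝ (𝒱 : Set (EuclideanSpace ℝ (Fin d))) = ⊤)
    (hsum : ∑ v ∈ 𝒱, v = 0)
    (C : ℝ≥0∞)
    (hC : IsGreatest
      ((fun c : EuclideanSpace ℝ (Fin d) → ℝ => volume (Rset 𝒱 c)) ''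
        {c | ∑ v ∈ 𝒱, c v = 1}) C)
    (b : EuclideanSpace ℝ (Fin d) → ℝ) :
    volume (Rset 𝒱 b) ≤ C * (ENNReal.ofReal (∑ v ∈ 𝒱, b v)) ^ d := by
  rcases lt_or_ge 0 (∑ v ∈ 𝒱, b v) with hpos | hnonpos
  · exact Rset.volume_le_of_sum_pos (fun c hc => hC.2 ⟨c, hc, rfl⟩) hpos
  rcases Nat.eq_zero_or_pos d with rfl | hd
  · obtain ⟨c, hc, hCc⟩ := hC.1
    rw [pow_zero, mul_one, ← hCc]
    exact measure_mono (Rset.eq_univ_of_sum_eq_one hc ▸ Set.subset_univ _)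
  · have : Nonempty (Fin d) := Fin.pos_iff_nonempty.mp hd
    rw [(Rset.subsingleton_of_sum_nonpos hspan hsum hnonpos).measure_zero]
    exact zero_le

/-- The generalized arithmetic–geometric inequality (3.1): if `𝒱` spans and has
zero sum, and `C` is the optimal constant of the Minkowski-type optimization
(greatest volume under `∑ c_v = 1`), then for arbitrary levels `b_v` one has
`vol(⋂_v H_v(b_v)) ≤ C (∑_v b_v)₊^d` whenever the volume is finite. -/
theorem stmt19 {d : ℕ} (𝒱 : Finset (EuclideanSpace ℝ (Fin d)))
    (hspan : Submodule.span ℝ (𝒱 : Set (EuclideanSpace ℝ (Fin d))) = ⊤)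
    (hsum : ∑ v ∈ 𝒱, v = 0)
    (C : ℝ≥0∞)
    (hC : IsGreatest
      ((fun c : EuclideanSpace ℝ (Fin d) → ℝ => volume (Rset 𝒱 c)) ''
        {c | ∑ v ∈ 𝒱, c v = 1}) C)
    (b : EuclideanSpace ℝ (Fin d) → ℝ)
    (hfin : volume (Rset 𝒱 b) ≠ ⊤) :
    volume (Rset 𝒱 b) ≤ C * (ENNReal.ofReal (∑ v ∈ 𝒱, b v)) ^ d :=
  stmt19_general 𝒱 hspan hsum C hC b
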